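/- Quantitative form of Proposition 1: Let K ≥ 1, let q be a probability vector on Fin K, let M ≥ 2, let s = (z¹, …, z^M) be M i.i.d. draws from q, let A be the event that the draws are pairwise distinct, and let ε = P(Aᶜ) be the collision probability. If ε < 1, then |H(s | A) − M·H(q)| ≤ (2·ε·M·log K + H_b(ε)) / (1 − ε). -/

import Mathlib

/-!
Write `H` for the entropy of `p = q^{⊗M}`, `S_E` and `S_Eᶜ` for the parts of `∑ -p log p` over an
event `E` and its complement, and `ε = p(Eᶜ)`. Then `H(s | E) = S_E / (1 - ε) + log (1 - ε)` and
`S_E = H - S_Eᶜ`, so `(1 - ε) (H(s | E) - H) = ε H - S_Eᶜ - η(1 - ε)` with `η x = -x log x`.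
Concavity of `η` (Jensen with uniform weights) gives `0 ≤ H ≤ log |T|` and
`0 ≤ S_Eᶜ ≤ η(ε) + ε log |T|`, while `H(q^{⊗M}) = M H(q)` and `log |T| = M log K`.
-/

open Finset

noncomputable def shannonEnt {T : Type*} [Fintype T] (p : T → ℝ) : ℝ :=
  ∑ t, Real.negMulLog (p t)

noncomputable def binEnt (e : ℝ) : ℝ :=
  Real.negMulLog e + Real.negMulLog (1 - e)

noncomputable def prodP {K M : ℕ} (q : Fin K → ℝ) (f : Fin M → Fin K) : ℝ :=
  ∏ i, q (f i)

noncomputable def condEnt {T : Type*} [Fintype T] (p : T → ℝ) (E : Finset T) : ℝ :=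
  ∑ t ∈ E, Real.negMulLog (p t / ∑ s ∈ E, p s)

open Real

theorem negMulLog_div (x c : ℝ) : negMulLog (x / c) = negMulLog x / c + x / c * log c := by
  rw [div_eq_mul_inv, negMulLog_mul]
  simp only [negMulLog, log_inv]
  ring

theorem sum_negMulLog_le_of_card_le {T : Type*} (E : Finset T) (w : T → ℝ)
    (hw : ∀ t ∈ E, 0 ≤ w t) {n : ℕ} (hn : #E ≤ n) :
    ∑ t ∈ E, negMulLog (w t) ≤ negMulLog (∑ t ∈ E, w t) + (∑ t ∈ E, w t) * log n := by
  rcases E.eq_empty_or_nonempty with rfl | hE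
  · simp
  set W := ∑ t ∈ E, w t
  have hcard : (0 : ℝ) < #E := by exact_mod_cast hE.card_pos
  have hJensen : ∑ t ∈ E, (#E : ℝ)⁻¹ • negMulLog (w t) ≤ negMulLog (∑ t ∈ E, (#E : ℝ)⁻¹ • w t) :=
    concaveOn_negMulLog.le_map_sum (fun _ _ => by positivity)
      (by simp [hcard.ne']) (fun t ht => Set.mem_Ici.mpr (hw t ht))
  simp only [smul_eq_mul, ← mul_sum] at hJensen
  have hscale : #E * negMulLog ((#E : ℝ)⁻¹ * W) = negMulLog W + W * log #E := by
    rw [inv_mul_eq_div, negMulLog_div]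
    field_simp
  calc ∑ t ∈ E, negMulLog (w t)
      = #E * ((#E : ℝ)⁻¹ * ∑ t ∈ E, negMulLog (w t)) := by field_simp
    _ ≤ #E * negMulLog ((#E : ℝ)⁻¹ * W) := by gcongr
    _ = negMulLog W + W * log #E := hscale
    _ ≤ negMulLog W + W * log n := by
        gcongr
        exact sum_nonneg hw

section ProbabilityVector

variable {T : Type*} [Fintype T] {p : T → ℝ}

theorem negMulLog_nonneg_of_sum_eq_one (hp0 : ∀ t, 0 ≤ p t) (hp1 : ∑ t, p t = 1) (t : T) :
    0 ≤ negMulLog (p t) :=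
  negMulLog_nonneg (hp0 t) (hp1 ▸ single_le_sum (fun s _ => hp0 s) (mem_univ t))

theorem shannonEnt_le_log_card (hp0 : ∀ t, 0 ≤ p t) (hp1 : ∑ t, p t = 1) :
    shannonEnt p ≤ log (Fintype.card T) := by
  simpa [shannonEnt, hp1] using sum_negMulLog_le_of_card_le univ p (fun t _ => hp0 t) le_rfl

theorem condEnt_eq (E : Finset T) (hE : ∑ t ∈ E, p t ≠ 0) :
    condEnt p E = (∑ t ∈ E, negMulLog (p t)) / (∑ t ∈ E, p t) + log (∑ t ∈ E, p t) := by
  simp only [condEnt, negMulLog_div, sum_add_distrib, ← sum_div, ← sum_mul, div_self hE, one_mul]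

theorem abs_condEnt_sub_shannonEnt_le [DecidableEq T] (hp0 : ∀ t, 0 ≤ p t)
    (hp1 : ∑ t, p t = 1) (E : Finset T) (ε : ℝ) (hε : ε = ∑ t ∈ Eᶜ, p t) (hε1 : ε < 1) :
    |condEnt p E - shannonEnt p| ≤ (2 * ε * log (Fintype.card T) + binEnt ε) / (1 - ε) := by
  set H := shannonEnt p
  set L := log (Fintype.card T)
  set SC := ∑ t ∈ Eᶜ, negMulLog (p t)
  have hPE : ∑ t ∈ E, p t = 1 - ε := by rw [hε, ← hp1, ← sum_add_sum_compl E]; ring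
  have hSE : ∑ t ∈ E, negMulLog (p t) = H - SC := by
    rw [eq_sub_iff_add_eq, sum_add_sum_compl]; rfl
  have hε0 : 0 ≤ ε := hε ▸ sum_nonneg fun t _ => hp0 t
  have hP : 0 < 1 - ε := by linarith
  have hdiff : condEnt p E - H = (ε * H - SC - negMulLog (1 - ε)) / (1 - ε) := by
    rw [condEnt_eq E (hPE ▸ hP.ne'), hPE, hSE, negMulLog]
    field_simp
    ring
  have hH0 : 0 ≤ H := sum_nonneg fun t _ => negMulLog_nonneg_of_sum_eq_one hp0 hp1 t
  have hHL : H ≤ L := shannonEnt_le_log_card hp0 hp1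
  have hSC0 : 0 ≤ SC := sum_nonneg fun t _ => negMulLog_nonneg_of_sum_eq_one hp0 hp1 t
  have hSCL : SC ≤ negMulLog ε + ε * L := by
    simpa only [← hε] using
      sum_negMulLog_le_of_card_le Eᶜ p (fun t _ => hp0 t) (card_le_univ Eᶜ)
  have hη₁ : 0 ≤ negMulLog ε := negMulLog_nonneg hε0 hε1.le
  have hη₂ : 0 ≤ negMulLog (1 - ε) := negMulLog_nonneg hP.le (by linarith)
  have hεH : ε * H ≤ ε * L := mul_le_mul_of_nonneg_left hHL hε0
  have hεH0 : 0 ≤ ε * H := mul_nonneg hε0 hH0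
  rw [hdiff, abs_div, abs_of_pos hP, div_le_div_iff_of_pos_right hP, abs_le, binEnt]
  constructor <;> linarith

end ProbabilityVector

theorem prodP_nonneg {K M : ℕ} {q : Fin K → ℝ} (hq0 : ∀ k, 0 ≤ q k) (f : Fin M → Fin K) :
    0 ≤ prodP q f :=
  prod_nonneg fun i _ => hq0 (f i)

theorem sum_prodP {K M : ℕ} (q : Fin K → ℝ) :
    ∑ f : Fin M → Fin K, prodP q f = (∑ k, q k) ^ M := by
  simp only [prodP]
  rw [← Fintype.prod_sum]
  simp

theorem shannonEnt_mul {α β : Type*} [Fintype α] [Fintype β] {p : α → ℝ} {r : β → ℝ}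
    (hp : ∑ a, p a = 1) (hr : ∑ b, r b = 1) :
    shannonEnt (fun x : α × β => p x.1 * r x.2) = shannonEnt p + shannonEnt r := by
  simp only [shannonEnt, negMulLog_mul, Fintype.sum_prod_type, sum_add_distrib, ← sum_mul,
    ← mul_sum, hp, hr, one_mul]

theorem shannonEnt_prodP {K : ℕ} {q : Fin K → ℝ} (hq1 : ∑ k, q k = 1) (M : ℕ) :
    shannonEnt (prodP q : (Fin M → Fin K) → ℝ) = M * shannonEnt q := by
  induction M with
  | zero => simp [shannonEnt, prodP]
  | succ n ih =>
    have hcons : shannonEnt (prodP q : (Fin (n + 1) → Fin K) → ℝ)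
        = shannonEnt (fun x : Fin K × (Fin n → Fin K) => q x.1 * prodP q x.2) :=
      (Fintype.sum_equiv (Fin.consEquiv fun _ => Fin K) _ _
        fun x => by simp [prodP, Fin.prod_univ_succ]).symm
    rw [hcons, shannonEnt_mul hq1 (by rw [sum_prodP, hq1, one_pow]), ih]
    push_cast
    ring

theorem prop1_quantitative_general (K M : ℕ)
    (q : Fin K → ℝ) (hq0 : ∀ k, 0 ≤ q k) (hq1 : ∑ k, q k = 1)
    (A : Finset (Fin M → Fin K))
    (ε : ℝ) (hε : ε = ∑ f ∈ Aᶜ, prodP q f) (hε1 : ε < 1) :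
    |condEnt (prodP q) A - M * shannonEnt q| ≤
      (2 * ε * M * Real.log K + binEnt ε) / (1 - ε) := by
  have h := abs_condEnt_sub_shannonEnt_le (prodP_nonneg hq0)
    (by rw [sum_prodP, hq1, one_pow]) A ε hε hε1
  rw [shannonEnt_prodP hq1, Fintype.card_fun, Fintype.card_fin, Fintype.card_fin, Nat.cast_pow,
    log_pow] at h
  convert h using 3
  ring

/-- Quantitative form of Proposition 1. -/
theorem prop1_quantitative (K M : ℕ) (hK : 1 ≤ K) (hM : 2 ≤ M)
    (q : Fin K → ℝ) (hq0 : ∀ k, 0 ≤ q k) (hq1 : ∑ k, q k = 1)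
    (A : Finset (Fin M → Fin K)) (hA : A = Finset.univ.filter Function.Injective)
    (ε : ℝ) (hε : ε = ∑ f ∈ Aᶜ, prodP q f) (hε1 : ε < 1) :
    |condEnt (prodP q) A - M * shannonEnt q| ≤
      (2 * ε * M * Real.log K + binEnt ε) / (1 - ε) :=
  prop1_quantitative_general K M q hq0 hq1 A ε hε hε1
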